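/- arXiv:0906.4559 — 2 statements merged into one kernel-verified Lean document; each statement's English description precedes it below -/
import Mathlib

section
/- Let γ > 1, r > 0, Δ ≠ 0, ψ ≠ 0, 2ψ − u²v_tσ ≠ 0, 2r(r−1) + 4Δ ≠ 0, and suppose c_s² = u²(γ+1)ψ/(2ψ − u²v_tσ) (vanishing of the denominator of the velocity-gradient equation) and that the numerator also vanishes: (2c_s²/(γ+1))·[(r−1)/Δ + 2/r − v_tσχ/(4ψ)] − χ/2 = 0. Then the critical-point advective velocity satisfies u² = χΔr/(2r(r−1) + 4Δ); in particular the terms involving v_t, σ, ψ cancel. -/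
/-- Let `γ > 1`, `r > 0`, `Δ ≠ 0`, `ψ ≠ 0`, `2ψ − u²v_tσ ≠ 0`, `2r(r−1) + 4Δ ≠ 0`,
and suppose `c_s² = u²(γ+1)ψ/(2ψ − u²v_tσ)` (vanishing of the denominator of the
velocity-gradient equation) and that the numerator also vanishes:
`(2c_s²/(γ+1))·[(r−1)/Δ + 2/r − v_tσχ/(4ψ)] − χ/2 = 0`. Then the critical-point
advective velocity satisfies `u² = χΔr/(2r(r−1) + 4Δ)`. -/
theorem critical_point_velocity_condition (γ r u cs2 ψ vt σ Δ χ : ℝ)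
    (hγ : 1 < γ) (hr : 0 < r)
    (hΔ : Δ ≠ 0) (hψ : ψ ≠ 0)
    (hW : 2 * ψ - u ^ 2 * vt * σ ≠ 0)
    (hden : 2 * r * (r - 1) + 4 * Δ ≠ 0)
    (hcs2 : cs2 = u ^ 2 * (γ + 1) * ψ / (2 * ψ - u ^ 2 * vt * σ))
    (hnum : 2 * cs2 / (γ + 1) * ((r - 1) / Δ + 2 / r - vt * σ * χ / (4 * ψ)) - χ / 2 = 0) :
    u ^ 2 = χ * Δ * r / (2 * r * (r - 1) + 4 * Δ) := by
  subst hcs2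
  have hγ1 : γ + 1 ≠ 0 := by linarith
  have hr' : r ≠ 0 := ne_of_gt hr
  rw [eq_div_iff hden]
  field_simp at hnum ⊢
  have hfac : (8 * (γ + 1) * ψ ^ 2) ≠ 0 := by positivity
  refine mul_left_cancel₀ hfac ?_
  linear_combination (γ + 1) * ψ * hnum
end

section
/- Let γ ≥ 1, 0 < u < 1, ψ > 0, and suppose u²v_tσ > 0 and 2ψ − u²v_tσ > 0. If the sound speed at the critical point satisfies c_s² = u²(γ+1)ψ/(2ψ − u²v_tσ), then the Mach number M = u/c_s at the critical point satisfies M² = (2ψ − u²v_tσ)/((γ+1)ψ) < 1; in particular the Mach number at the critical point is strictly less than unity, so the critical point is not a sonic point. -/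
/-- Let `γ ≥ 1`, `0 < u < 1`, `ψ > 0`, and suppose `u²v_tσ > 0` and `2ψ − u²v_tσ > 0`.
If the sound speed at the critical point satisfies `c_s² = u²(γ+1)ψ/(2ψ − u²v_tσ)`,
then the Mach number `M = u/c_s` at the critical point satisfies
`M² = (2ψ − u²v_tσ)/((γ+1)ψ) < 1`; in particular the Mach number at the critical point
is strictly less than unity, so the critical point is not a sonic point. -/
theorem mach_number_at_critical_point_lt_one (γ u ψ vt σ cs M : ℝ)
    (hγ : 1 ≤ γ) (hu : 0 < u) (hu1 : u < 1) (hψ : 0 < ψ)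
    (hpos : 0 < u ^ 2 * vt * σ)
    (hW : 0 < 2 * ψ - u ^ 2 * vt * σ)
    (hcs : 0 < cs)
    (hcs2 : cs ^ 2 = u ^ 2 * (γ + 1) * ψ / (2 * ψ - u ^ 2 * vt * σ))
    (hM : M = u / cs) :
    M ^ 2 = (2 * ψ - u ^ 2 * vt * σ) / ((γ + 1) * ψ) ∧ M ^ 2 < 1 ∧ M < 1 := by
  have hγψ : 0 < (γ + 1) * ψ := by positivity
  have heq : M ^ 2 = (2 * ψ - u ^ 2 * vt * σ) / ((γ + 1) * ψ) := by
    rw [hM, div_pow, hcs2]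
    field_simp
  have hlt : M ^ 2 < 1 := by
    rw [heq, div_lt_one hγψ]
    nlinarith
  exact ⟨heq, hlt, by nlinarith [sq_nonneg (M - 1), sq_nonneg (M + 1)]⟩
end
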